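/- Let r_1, …, r_{D+1} be exchangeable random variables whose joint distribution is almost surely tie-free. Then the rank of r_{D+1} among r_1, …, r_{D+1} is uniformly distributed on {1, …, D+1}. -/

import Mathlib

/-!
A permutation of the coordinates permutes the ranks, so by exchangeability the events
`{rank of coordinate i = j}` all have the same probability. Off the null set of ties the ranks
form a bijection onto `{1, …, n}`, so exactly one of these `n` events occurs; their
probabilities therefore sum to `1`, and each equals `1 / n`.
-/

open MeasureTheory ENNReal Finset Function

section Combinatorics

variable {ι α : Type*} [Fintype ι] [LinearOrder α]

noncomputable def coordRank (x : ι → α) (i : ι) : ℕ := #{k | x k ≤ x i}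

lemma coordRank_lt_coordRank {x : ι → α} {i j : ι} (h : x i < x j) :
    coordRank x i < coordRank x j := by
  refine card_lt_card ⟨fun k hk ↦ ?_, fun hsub ↦ ?_⟩
  · simp only [mem_filter, mem_univ, true_and] at hk ⊢
    exact hk.trans h.le
  · have hj : j ∈ ({k | x k ≤ x j} : Finset ι) := by simp
    have hji : x j ≤ x i := by simpa using hsub hj
    exact h.not_ge hji

lemma coordRank_injective {x : ι → α} (hx : Injective x) : Injective (coordRank x) := by
  intro i j hij
  by_contra hne
  rcases (hx.ne hne).lt_or_gt with h | h
  · exact (coordRank_lt_coordRank h).ne hij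
  · exact (coordRank_lt_coordRank h).ne' hij

lemma coordRank_mem_Icc (x : ι → α) (i : ι) : coordRank x i ∈ Icc 1 (Fintype.card ι) :=
  mem_Icc.2 ⟨card_pos.2 ⟨i, by simp⟩, (card_filter_le _ _).trans_eq card_univ⟩

lemma coordRank_comp_perm (x : ι → α) (σ : Equiv.Perm ι) (i : ι) :
    coordRank (x ∘ σ) i = coordRank x (σ i) :=
  card_equiv σ (by simp)

lemma image_coordRank {x : ι → α} (hx : Injective x) :
    univ.image (coordRank x) = Icc 1 (Fintype.card ι) := by
  classical
  refine eq_of_subset_of_card_le (fun m hm ↦ ?_) ?_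
  · obtain ⟨i, -, rfl⟩ := mem_image.1 hm
    exact coordRank_mem_Icc x i
  · simp [card_image_of_injective _ (coordRank_injective hx)]

end Combinatorics

lemma measurable_comp_right {ι κ α : Type*} [MeasurableSpace α] (σ : κ → ι) :
    Measurable fun x : ι → α ↦ x ∘ σ :=
  measurable_pi_lambda _ fun _ ↦ measurable_pi_apply _

section Exchangeable

variable {ι α : Type*} [Fintype ι] [LinearOrder α] [TopologicalSpace α] [OrderClosedTopology α]
  [SecondCountableTopology α] [MeasurableSpace α] [OpensMeasurableSpace α] {μ : Measure (ι → α)}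

lemma measurable_coordRank (i : ι) : Measurable fun x : ι → α ↦ coordRank x i := by
  classical
  simp only [coordRank, card_filter]
  exact Finset.measurable_sum _ fun k _ ↦ Measurable.ite
    (measurableSet_le (measurable_pi_apply k) (measurable_pi_apply i)) measurable_const
    measurable_const

lemma measurableSet_coordRank_eq (i : ι) (j : ℕ) :
    MeasurableSet {x : ι → α | coordRank x i = j} :=
  measurable_coordRank i (measurableSet_singleton j)

lemma measurableSet_setOf_injective : MeasurableSet {x : ι → α | Injective x} := by
  simp only [Injective, Set.ofPred_forall]
  refine .iInter fun i ↦ .iInter fun j ↦ .imp ?_ (.const (i = j))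
  simp only [le_antisymm_iff, Set.ofPred_and]
  exact (measurableSet_le (measurable_pi_apply i) (measurable_pi_apply j)).inter
    (measurableSet_le (measurable_pi_apply j) (measurable_pi_apply i))

lemma measure_coordRank_perm_eq (hexch : ∀ σ : Equiv.Perm ι, μ.map (· ∘ σ) = μ)
    (σ : Equiv.Perm ι) (i : ι) (j : ℕ) :
    μ {x | coordRank x (σ i) = j} = μ {x | coordRank x i = j} := by
  conv_rhs => rw [← hexch σ,
    Measure.map_apply (measurable_comp_right σ) (measurableSet_coordRank_eq i j)]
  simp only [Set.preimage_ofPred_eq, coordRank_comp_perm]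

lemma sum_measure_coordRank_eq [IsProbabilityMeasure μ] (hties : μ {x | ¬Injective x} = 0)
    {j : ℕ} (hj : j ∈ Icc 1 (Fintype.card ι)) : ∑ i, μ {x | coordRank x i = j} = 1 := by
  classical
  have hdisj : Set.Pairwise (univ : Finset ι)
      (AEDisjoint μ on fun i ↦ {x | coordRank x i = j}) := by
    refine fun a _ b _ hab ↦ measure_mono_null (fun x ⟨ha, hb⟩ ↦ ?_) hties
    exact fun hx ↦ hab (coordRank_injective hx (ha.trans hb.symm))
  rw [← measure_biUnion_finset₀ hdisj
    fun i _ ↦ (measurableSet_coordRank_eq i j).nullMeasurableSet]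
  refine (prob_compl_eq_zero_iff ?_).1 (measure_mono_null (Set.compl_subset_comm.1 ?_) hties)
  · exact .biUnion (Finset.countable_toSet _) fun i _ ↦ measurableSet_coordRank_eq i j
  · intro x (hx : ¬¬Injective x)
    obtain ⟨i, -, hi⟩ := mem_image.1 ((image_coordRank (not_not.1 hx)).symm ▸ hj)
    exact Set.mem_biUnion (mem_univ i) hi

theorem measure_coordRank_eq_inv_card [IsProbabilityMeasure μ]
    (hexch : ∀ σ : Equiv.Perm ι, μ.map (· ∘ σ) = μ) (hties : μ {x | ¬Injective x} = 0)
    (i : ι) {j : ℕ} (hj : j ∈ Icc 1 (Fintype.card ι)) :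
    μ {x | coordRank x i = j} = (Fintype.card ι : ℝ≥0∞)⁻¹ := by
  classical
  have hconst : ∀ k, μ {x | coordRank x k = j} = μ {x | coordRank x i = j} := fun k ↦ by
    simpa using measure_coordRank_perm_eq hexch (Equiv.swap i k) i j
  have hsum := sum_measure_coordRank_eq hties hj
  simp only [hconst, sum_const, card_univ, nsmul_eq_mul] at hsum
  rw [mul_comm] at hsum
  exact ENNReal.eq_inv_of_mul_eq_one_left hsum

end Exchangeable

/-- for exchangeable, almost-surely tie-free random variables
r_1,…,r_{D+1}, the rank of r_{D+1} among all of them is uniform on {1,…,D+1}. -/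
theorem stmt_7 (D : ℕ) {Ω : Type*} [MeasurableSpace Ω]
    (P : Measure Ω) [IsProbabilityMeasure P]
    (r : Fin (D + 1) → Ω → ℝ) (hmeas : ∀ i, Measurable (r i))
    (hexch : ∀ σ : Equiv.Perm (Fin (D + 1)),
      Measure.map (fun ω i => r (σ i) ω) P = Measure.map (fun ω i => r i ω) P)
    (hties : P {ω | ∃ i j, i ≠ j ∧ r i ω = r j ω} = 0)
    (rank : Ω → ℕ)
    (hrank : ∀ ω, rank ω =
      (Finset.univ.filter fun i : Fin (D + 1) =>
        r i ω ≤ r (Fin.last D) ω).card) :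
    ∀ j ∈ Finset.Icc 1 (D + 1), P {ω | rank ω = j} = (D + 1 : ℝ≥0∞)⁻¹ := by
  intro j hj
  set f : Ω → Fin (D + 1) → ℝ := fun ω i => r i ω
  have hf : Measurable f := measurable_pi_lambda _ hmeas
  have hlaw_exch : ∀ σ : Equiv.Perm (Fin (D + 1)), (P.map f).map (· ∘ σ) = P.map f :=
    fun σ ↦ by
      rw [Measure.map_map (measurable_comp_right σ) hf]
      exact hexch σ
  have hlaw_ties : P.map f {x | ¬Injective x} = 0 := by
    rw [Measure.map_apply hf]
    · simpa [Injective, not_forall, and_comm, eq_comm] using hties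
    · exact measurableSet_setOf_injective.compl
  have : IsProbabilityMeasure (P.map f) := Measure.isProbabilityMeasure_map hf.aemeasurable
  have hrank_eq : {ω | rank ω = j} = f ⁻¹' {x | coordRank x (Fin.last D) = j} := by
    ext ω
    simp [hrank ω, coordRank, f]
  rw [hrank_eq, ← Measure.map_apply hf (measurableSet_coordRank_eq _ j),
    measure_coordRank_eq_inv_card hlaw_exch hlaw_ties _ (by simpa using hj)]
  simp
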